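/- Started from a quasi-stationary distribution μ, the pair (X_{τ_ℰ - 1}, X_{τ_ℰ}) consisting of the last state visited in I before absorption and the absorption state is independent of the absorption time τ_ℰ; moreover ℙ_μ(X_{τ_ℰ-1} = i, X_{τ_ℰ} = ε) = P(i,ε) μ(i) (1-γ)^{-1}. -/

import Mathlib

/-!
The probabilities in the statement are the usual path sums: `ℙ_μ(X_{τ-1} = i, X_τ = ε, τ = n)`
is `(μᵀ P_I^{n-1})(i) P(i,ε)` and `ℙ_μ(τ > k) = ∑_j (μᵀ P_I^k)(j)`.
Since `μ` is a left eigenvector of `P_I`, `μᵀ P_I^k = γ^k μᵀ`. Hence the joint law is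
`γ^{n-1} μ(i) P(i,ε)`, which factors as the geometric law `γ^{n-1} (1 - γ)` of `τ` times
`μ(i) P(i,ε) (1 - γ)⁻¹`, and summing the geometric series over `n` identifies the second
factor as the law of the pair.
-/

open Finset Matrix

namespace Matrix

variable {n R : Type*} [Fintype n] [DecidableEq n]

theorem vecMul_pow_of_vecMul_eq_smul [CommSemiring R] {A : Matrix n n R} {v : n → R} {c : R}
    (h : v ᵥ* A = c • v) (m : ℕ) : v ᵥ* (A ^ m) = c ^ m • v := by
  induction m with
  | zero => simp
  | succ m ih => rw [pow_succ, ← vecMul_vecMul, ih, smul_vecMul, h, smul_smul, pow_succ]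

theorem tsum_vecMul_pow_apply_mul_of_vecMul_eq_smul {A : Matrix n n ℝ} {v : n → ℝ} {γ : ℝ}
    (h : v ᵥ* A = γ • v) (hγ₀ : 0 ≤ γ) (hγ₁ : γ < 1) (i : n) (p : ℝ) :
    ∑' m : ℕ, (v ᵥ* (A ^ m)) i * p = p * v i * (1 - γ)⁻¹ := by
  simp_rw [vecMul_pow_of_vecMul_eq_smul h, Pi.smul_apply, smul_eq_mul, mul_assoc,
    tsum_mul_right, tsum_geometric_of_lt_one hγ₀ hγ₁]
  ring

theorem sum_vecMul_pow_sub_sum_vecMul_pow_succ [CommRing R] {A : Matrix n n R} {v : n → R}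
    {c : R} (h : v ᵥ* A = c • v) (hv : ∑ j, v j = 1) (k : ℕ) :
    ∑ j, (v ᵥ* (A ^ k)) j - ∑ j, (v ᵥ* (A ^ (k + 1))) j = c ^ k * (1 - c) := by
  simp only [vecMul_pow_of_vecMul_eq_smul h, Pi.smul_apply, smul_eq_mul, ← mul_sum, hv]
  ring

end Matrix

theorem qsd_pair_independent_of_absorption_time {I E : Type*} [Fintype I]
    [DecidableEq I]
    (P : Matrix (I ⊕ E) (I ⊕ E) ℝ)
    (PI : Matrix I I ℝ)
    (μ : I → ℝ) (hμ1 : ∑ i, μ i = 1)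
    (γ : ℝ) (hγ : 0 < γ ∧ γ < 1)
    (hqsd : μ ᵥ* PI = γ • μ) :
    ∀ (i : I) (ε : E),
      -- marginal law of the pair (last state in I, absorption state)
      (∑' m : ℕ, (μ ᵥ* (PI ^ m)) i * P (Sum.inl i) (Sum.inr ε))
        = P (Sum.inl i) (Sum.inr ε) * μ i * (1 - γ)⁻¹
      ∧ -- independence: joint law = (pair marginal) × (law of τ_ℰ)
      ∀ n : ℕ, 1 ≤ n →
        (μ ᵥ* (PI ^ (n - 1))) i * P (Sum.inl i) (Sum.inr ε)
          = (∑' m : ℕ, (μ ᵥ* (PI ^ m)) i * P (Sum.inl i) (Sum.inr ε))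
            * ((∑ j : I, (μ ᵥ* (PI ^ (n - 1))) j) - ∑ j : I, (μ ᵥ* (PI ^ n)) j) := by
  intro i ε
  have pair_law := tsum_vecMul_pow_apply_mul_of_vecMul_eq_smul hqsd hγ.1.le hγ.2 i
    (P (Sum.inl i) (Sum.inr ε))
  refine ⟨pair_law, fun n hn => ?_⟩
  obtain ⟨k, rfl⟩ := Nat.exists_eq_add_of_le' hn
  have hγ₁ : (1 : ℝ) - γ ≠ 0 := by linarith [hγ.2]
  rw [pair_law, Nat.add_sub_cancel, sum_vecMul_pow_sub_sum_vecMul_pow_succ hqsd hμ1,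
    vecMul_pow_of_vecMul_eq_smul hqsd, Pi.smul_apply, smul_eq_mul]
  field_simp
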